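/- Let a > 1 be real and fix an integer k ≥ 1 with k ≤ N* where a = N*/n for positive integers n < N*. If ξ is uniformly distributed on (0, a), then the probability that there exists j ∈ {1,...,n} with k - 1 < ξ + (j-1)a ≤ k equals 1/a. Equivalently, the Lebesgue measure of { ξ ∈ (0,a) : ∃ j ∈ {1,...,n}, k - 1 - (j-1)a < ξ ≤ k - (j-1)a } equals 1. -/
import Mathlib


open MeasureTheory

/-- Self-weighting of fractional interval systematic sampling: for a fixed
population index `k ∈ {1,...,N*}`, the set of starting points `ξ ∈ (0,a)` for
which person `k` is sampled has Lebesgue measure 1, i.e. the inclusion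
probability is `1/a = n/N*`. -/
theorem stmt_5 (Nstar n : ℕ) (hn : 0 < n) (hlt : n < Nstar)
    (a : ℝ) (ha : a = (Nstar : ℝ) / n) (k : ℕ) (hk1 : 1 ≤ k) (hkN : k ≤ Nstar) :
    volume {ξ : ℝ | ξ ∈ Set.Ioo 0 a ∧ ∃ j ∈ Finset.Icc 1 n,
      (k : ℝ) - 1 - ((j : ℝ) - 1) * a < ξ ∧ ξ ≤ (k : ℝ) - ((j : ℝ) - 1) * a} = 1 := by
  have hnpos : (0:ℝ) < n := by exact_mod_cast hn
  have ha1 : 1 < a := by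
    rw [ha, lt_div_iff₀ hnpos, one_mul]; exact_mod_cast hlt
  have ha0 : (0:ℝ) < a := lt_trans one_pos ha1
  have hk0 : (0:ℝ) < k := by exact_mod_cast hk1
  have hkn : (k:ℝ) ≤ n * a := by
    rw [ha]; rw [mul_div_cancel₀ _ (ne_of_gt hnpos)]; exact_mod_cast hkN
  set j0 : ℕ := ⌈(k:ℝ)/a⌉₊ with hj0def
  have hdiv_pos : 0 < (k:ℝ)/a := div_pos hk0 ha0
  have hj0_pos : 1 ≤ j0 := Nat.one_le_iff_ne_zero.mpr (by
    simp [hj0def, Nat.ceil_eq_zero, not_le, hdiv_pos])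
  have hj0u : (k:ℝ)/a ≤ j0 := Nat.le_ceil _
  have hj0l : (j0:ℝ) < (k:ℝ)/a + 1 := Nat.ceil_lt_add_one hdiv_pos.le
  have hku : (k:ℝ) ≤ j0 * a := (div_le_iff₀ ha0).mp hj0u
  have hkl : ((j0:ℝ) - 1) * a < k := (lt_div_iff₀ ha0).mp (by linarith)
  have hj0n : j0 ≤ n := by
    have h1 : ((j0:ℝ) - 1) * a < (n:ℝ) * a := lt_of_lt_of_le hkl hkn
    have h2 : (j0:ℝ) - 1 < n := lt_of_mul_lt_mul_right h1 ha0.le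
    have h3 : (j0:ℝ) < (n:ℝ) + 1 := by linarith
    exact_mod_cast Nat.lt_succ_iff.mp (by exact_mod_cast h3)
  set r : ℝ := (k:ℝ) - ((j0:ℝ) - 1) * a with hrdef
  have hr0 : 0 < r := by simp [hrdef]; linarith
  have hra : r ≤ a := by
    have : (j0:ℝ) * a = ((j0:ℝ) - 1) * a + a := by ring
    simp only [hrdef]; linarith
  -- dichotomy lemma
  have key : ∀ j : ℕ, j ∈ Finset.Icc 1 n → ∀ ξ : ℝ, 0 < ξ → ξ < a →
      (k:ℝ) - 1 - ((j:ℝ) - 1) * a < ξ → ξ ≤ (k:ℝ) - ((j:ℝ) - 1) * a →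
      j = j0 ∨ j + 1 = j0 := by
    intro j hj ξ hx0 hxa hjl hjr
    have hA : ((j:ℝ) - 1) * a < k := by linarith
    have hjle : j ≤ j0 := by
      have h1 : ((j:ℝ) - 1) < (k:ℝ)/a := (lt_div_iff₀ ha0).mpr hA
      have h2 : (j:ℝ) < (j0:ℝ) + 1 := by linarith
      exact_mod_cast Nat.lt_succ_iff.mp (by exact_mod_cast h2)
    have hB : (k:ℝ) - 1 < (j:ℝ) * a := by
      have hexp : (j:ℝ) * a = ((j:ℝ) - 1) * a + a := by ring
      linarith
    have hC : ((j0:ℝ) - 1 - j) * a < 1 * a := by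
      have hexp : ((j0:ℝ) - 1 - j) * a = ((j0:ℝ) - 1) * a - (j:ℝ) * a := by ring
      linarith
    have hD : (j0:ℝ) - 1 - j < 1 := lt_of_mul_lt_mul_right hC ha0.le
    have hge : j0 ≤ j + 1 := by
      have h2 : (j0:ℝ) < (j:ℝ) + 2 := by linarith
      have : j0 < j + 2 := by exact_mod_cast h2
      omega
    omega
  by_cases hcase : 1 ≤ r
  · -- single interval Ioc (r-1) r inside (0,a)
    apply le_antisymm
    · have hsub : {ξ : ℝ | ξ ∈ Set.Ioo 0 a ∧ ∃ j ∈ Finset.Icc 1 n,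
          (k : ℝ) - 1 - ((j : ℝ) - 1) * a < ξ ∧ ξ ≤ (k : ℝ) - ((j : ℝ) - 1) * a}
          ⊆ Set.Ioc (r - 1) r := by
        rintro ξ ⟨⟨hx0, hxa⟩, j, hj, hjl, hjr⟩
        rcases key j hj ξ hx0 hxa hjl hjr with hcase1 | hcase2
        · subst hcase1
          constructor
          · simp only [hrdef]; linarith
          · simp only [hrdef]; linarith
        · exfalso
          have hcast : (j:ℝ) = (j0:ℝ) - 1 := by
            have : ((j+1 : ℕ):ℝ) = (j0:ℝ) := by exact_mod_cast congrArg (Nat.cast (R := ℝ)) hcase2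
            push_cast at this; linarith
          have hexp : ((j:ℝ) - 1) * a = ((j0:ℝ) - 1) * a - a := by rw [hcast]; ring
          -- hjl : k - 1 - ((j-1)a) < ξ, i.e. r - 1 + a < ξ < a, but r ≥ 1
          have : r - 1 + a < ξ := by simp only [hrdef]; linarith
          linarith
      calc volume _ ≤ volume (Set.Ioc (r - 1) r) := measure_mono hsub
        _ = ENNReal.ofReal (r - (r - 1)) := Real.volume_Ioc
        _ = 1 := by norm_num
    · have hsub : Set.Ioo (r - 1) r ⊆ {ξ : ℝ | ξ ∈ Set.Ioo 0 a ∧ ∃ j ∈ Finset.Icc 1 n,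
          (k : ℝ) - 1 - ((j : ℝ) - 1) * a < ξ ∧ ξ ≤ (k : ℝ) - ((j : ℝ) - 1) * a} := by
        rintro ξ ⟨h1, h2⟩
        refine ⟨⟨by linarith, by linarith⟩, j0, Finset.mem_Icc.mpr ⟨hj0_pos, hj0n⟩, ?_, ?_⟩
        · simp only [hrdef] at h1; linarith
        · simp only [hrdef] at h2; linarith
      calc (1:ENNReal) = ENNReal.ofReal (r - (r - 1)) := by norm_num
        _ = volume (Set.Ioo (r - 1) r) := (Real.volume_Ioo).symm
        _ ≤ _ := measure_mono hsub
  · push_neg at hcase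
    have hj02 : 2 ≤ j0 := by
      rcases Nat.lt_or_ge j0 2 with h | h
      · exfalso
        have : j0 = 1 := by omega
        rw [this] at hrdef
        have : r = (k:ℝ) := by simp [hrdef]
        have hk1' : (1:ℝ) ≤ k := by exact_mod_cast hk1
        linarith
      · exact h
    have hj1n : 1 ≤ j0 - 1 ∧ j0 - 1 ≤ n := ⟨by omega, by omega⟩
    have hcastj1 : ((j0 - 1 : ℕ):ℝ) = (j0:ℝ) - 1 := by
      push_cast [Nat.cast_sub hj0_pos]; ring
    apply le_antisymm
    · have hsub : {ξ : ℝ | ξ ∈ Set.Ioo 0 a ∧ ∃ j ∈ Finset.Icc 1 n,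
          (k : ℝ) - 1 - ((j : ℝ) - 1) * a < ξ ∧ ξ ≤ (k : ℝ) - ((j : ℝ) - 1) * a}
          ⊆ Set.Ioc 0 r ∪ Set.Ioc (r - 1 + a) a := by
        rintro ξ ⟨⟨hx0, hxa⟩, j, hj, hjl, hjr⟩
        rcases key j hj ξ hx0 hxa hjl hjr with hcase1 | hcase2
        · subst hcase1
          left
          exact ⟨hx0, by simp only [hrdef]; linarith⟩
        · right
          have hcast : (j:ℝ) = (j0:ℝ) - 1 := by
            have : ((j+1 : ℕ):ℝ) = (j0:ℝ) := by exact_mod_cast congrArg (Nat.cast (R := ℝ)) hcase2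
            push_cast at this; linarith
          have hexp : ((j:ℝ) - 1) * a = ((j0:ℝ) - 1) * a - a := by rw [hcast]; ring
          constructor
          · simp only [hrdef]; linarith
          · linarith
      calc volume _ ≤ volume (Set.Ioc 0 r ∪ Set.Ioc (r - 1 + a) a) := measure_mono hsub
        _ ≤ volume (Set.Ioc 0 r) + volume (Set.Ioc (r - 1 + a) a) := measure_union_le _ _
        _ = ENNReal.ofReal (r - 0) + ENNReal.ofReal (a - (r - 1 + a)) := by
            rw [Real.volume_Ioc, Real.volume_Ioc]
        _ = ENNReal.ofReal (r + (1 - r)) := by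
            rw [← ENNReal.ofReal_add (by linarith) (by linarith)]
            norm_num
        _ = 1 := by norm_num
    · have hsub : Set.Ioo 0 r ∪ Set.Ioo (r - 1 + a) a ⊆
          {ξ : ℝ | ξ ∈ Set.Ioo 0 a ∧ ∃ j ∈ Finset.Icc 1 n,
          (k : ℝ) - 1 - ((j : ℝ) - 1) * a < ξ ∧ ξ ≤ (k : ℝ) - ((j : ℝ) - 1) * a} := by
        rintro ξ (⟨h1, h2⟩ | ⟨h1, h2⟩)
        · refine ⟨⟨h1, by linarith⟩, j0, Finset.mem_Icc.mpr ⟨hj0_pos, hj0n⟩, ?_, ?_⟩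
          · linarith [hrdef.ge]
          · linarith [hrdef.ge]
        · refine ⟨⟨by linarith, h2⟩, j0 - 1, Finset.mem_Icc.mpr hj1n, ?_, ?_⟩
          · rw [hcastj1]
            have hexp : ((j0:ℝ) - 1 - 1) * a = ((j0:ℝ) - 1) * a - a := by ring
            linarith [hrdef.ge, hrdef.le]
          · rw [hcastj1]
            have hexp : ((j0:ℝ) - 1 - 1) * a = ((j0:ℝ) - 1) * a - a := by ring
            linarith [hrdef.ge, hrdef.le]
      have hdisj : Disjoint (Set.Ioo (0:ℝ) r) (Set.Ioo (r - 1 + a) a) := by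
        apply Set.disjoint_left.mpr
        rintro ξ ⟨_, h2⟩ ⟨h3, _⟩
        linarith
      calc (1:ENNReal) = ENNReal.ofReal (r + (1 - r)) := by norm_num
        _ = ENNReal.ofReal (r - 0) + ENNReal.ofReal (a - (r - 1 + a)) := by
            rw [← ENNReal.ofReal_add (by linarith) (by linarith)]
            norm_num
        _ = volume (Set.Ioo 0 r) + volume (Set.Ioo (r - 1 + a) a) := by
            rw [Real.volume_Ioo, Real.volume_Ioo]
        _ = volume (Set.Ioo 0 r ∪ Set.Ioo (r - 1 + a) a) :=
            (measure_union hdisj measurableSet_Ioo).symm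
        _ ≤ _ := measure_mono hsub
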